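/- arXiv:2010.14486 — 2 statements merged into one kernel-verified Lean document; each statement's English description precedes it below -/
import Mathlib

section
/- (Hardy–Poincaré inequality, case (a).) Suppose there exists θ ∈ (0,1) such that the function x ↦ a(x)/x^θ is nonincreasing on (0,1]. Then there exists a constant C_H > 0 such that for every function w : [0,1] → ℝ that is locally absolutely continuous on (0,1], continuous at 0, and satisfies w(0)=0 and ∫₀¹ a(x) |w'(x)|² dx < +∞, one has ∫₀¹ (a(x)/x²) w(x)² dx ≤ C_H ∫₀¹ a(x) |w'(x)|² dx. -/
/-!
Put `γ = (1 - θ) / 2`. For `0 < x < 1`, bound `|w x|` by `∫₀ˣ |w'|` and apply Cauchy–Schwarz with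
the weight `a t * t ^ γ`. Since `a / t ^ θ` is nonincreasing, `∫₀ˣ dt / (a t * t ^ γ)` is at most
`x ^ (1 - γ) / ((1 - γ - θ) * a x)`, hence
`(a x / x²) * (w x)² ≤ x ^ (-1 - γ) / (1 - γ - θ) * ∫₀ˣ a t * t ^ γ * (w' t)²`.
Integrating in `x` and exchanging the order of integration, `∫ₜ¹ x ^ (-1 - γ) dx ≤ t ^ (-γ) / γ`
absorbs the weight `t ^ γ`, which gives the inequality with
`C_H = 1 / (γ * (1 - γ - θ)) = 4 / (1 - θ) ^ 2`.
-/

open MeasureTheory Set Real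
open scoped ENNReal

theorem lintegral_Ioo_rpow {r x : ℝ} (hr : -1 < r) (hx : 0 ≤ x) :
    ∫⁻ t in Ioo 0 x, ENNReal.ofReal (t ^ r) = ENNReal.ofReal (x ^ (r + 1) / (r + 1)) := by
  have hint : IntegrableOn (fun t : ℝ => t ^ r) (Ioc 0 x) :=
    (intervalIntegrable_iff_integrableOn_Ioc_of_le hx).1
      (intervalIntegral.intervalIntegrable_rpow' hr)
  rw [setLIntegral_congr Ioo_ae_eq_Ioc, ← ofReal_integral_eq_lintegral_ofReal hint
      ((ae_restrict_iff' measurableSet_Ioc).2 (ae_of_all _ fun t ht => rpow_nonneg ht.1.le r)),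
    ← intervalIntegral.integral_of_le hx, integral_rpow (Or.inl hr),
    zero_rpow (by linarith), sub_zero]

theorem lintegral_Ioi_rpow {r x : ℝ} (hr : r < -1) (hx : 0 < x) :
    ∫⁻ t in Ioi x, ENNReal.ofReal (t ^ r) = ENNReal.ofReal (-x ^ (r + 1) / (r + 1)) := by
  rw [← ofReal_integral_eq_lintegral_ofReal (integrableOn_Ioi_rpow_of_lt hr hx)
      ((ae_restrict_iff' measurableSet_Ioi).2
        (ae_of_all _ fun t ht => rpow_nonneg (hx.trans ht).le r)),
    integral_Ioi_rpow_of_lt hr hx]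

theorem aemeasurable_of_hasDerivAt {μ : Measure ℝ} {s : Set ℝ} (hs : MeasurableSet s)
    {w w' : ℝ → ℝ} (hw : ∀ t ∈ s, HasDerivAt w (w' t) t) : AEMeasurable w' (μ.restrict s) :=
  (measurable_deriv w).aemeasurable.congr
    ((ae_restrict_iff' hs).2 (ae_of_all _ fun t ht => (hw t ht).deriv))

theorem enorm_sub_le_lintegral_enorm_of_hasDerivAt {w w' : ℝ → ℝ} {a b : ℝ} (hab : a ≤ b)
    (hwa : ContinuousWithinAt w (Icc a b) a) (hw : ∀ t ∈ Ioc a b, HasDerivAt w (w' t) t) :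
    ‖w b - w a‖ₑ ≤ ∫⁻ t in Ioo a b, ‖w' t‖ₑ := by
  by_cases hfin : ∫⁻ t in Ioo a b, ‖w' t‖ₑ = ⊤
  · exact hfin ▸ le_top
  have hw'_int : IntegrableOn w' (Ioc a b) := by
    rw [integrableOn_Ioc_iff_integrableOn_Ioo]
    exact ⟨(aemeasurable_of_hasDerivAt measurableSet_Ioo fun t ht =>
      hw t (Ioo_subset_Ioc_self ht)).aestronglyMeasurable, lt_top_iff_ne_top.2 hfin⟩
  have hcont : ContinuousOn w (Icc a b) := by
    intro t ht
    rcases eq_or_lt_of_le ht.1 with rfl | hat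
    · exact hwa
    · exact (hw t ⟨hat, ht.2⟩).continuousAt.continuousWithinAt
  rw [← intervalIntegral.integral_eq_sub_of_hasDerivAt_of_le hab hcont
      (fun t ht => hw t (Ioo_subset_Ioc_self ht))
      ((intervalIntegrable_iff_integrableOn_Ioc_of_le hab).2 hw'_int),
    intervalIntegral.integral_of_le hab, setLIntegral_congr Ioo_ae_eq_Ioc]
  exact enorm_integral_le_lintegral_enorm _

theorem sq_lintegral_enorm_le_weighted {α : Type*} [MeasurableSpace α] {μ : Measure α}
    {v ρ : α → ℝ}
    (hv : AEMeasurable v μ) (hρ : AEMeasurable ρ μ) (hρ_pos : ∀ᵐ x ∂μ, 0 < ρ x) :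
    (∫⁻ x, ‖v x‖ₑ ∂μ) ^ 2 ≤
      (∫⁻ x, ENNReal.ofReal (ρ x * v x ^ 2) ∂μ) * ∫⁻ x, ENNReal.ofReal (ρ x)⁻¹ ∂μ := by
  set f : α → ℝ≥0∞ := fun x => ENNReal.ofReal (√(ρ x) * |v x|)
  set g : α → ℝ≥0∞ := fun x => ENNReal.ofReal (√(ρ x))⁻¹
  have hfg : ∀ᵐ x ∂μ, (f * g) x = ‖v x‖ₑ := by
    filter_upwards [hρ_pos] with x hx
    rw [Pi.mul_apply, enorm_eq_ofReal_abs, ← ENNReal.ofReal_mul (by positivity), mul_right_comm,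
      mul_inv_cancel₀ (sqrt_pos.2 hx).ne', one_mul]
  have hf2 : ∀ᵐ x ∂μ, f x ^ (2 : ℝ) = ENNReal.ofReal (ρ x * v x ^ 2) := by
    filter_upwards [hρ_pos] with x hx
    rw [ENNReal.ofReal_rpow_of_nonneg (by positivity) zero_le_two, rpow_two, mul_pow, sq_abs,
      sq_sqrt hx.le]
  have hg2 : ∀ᵐ x ∂μ, g x ^ (2 : ℝ) = ENNReal.ofReal (ρ x)⁻¹ := by
    filter_upwards [hρ_pos] with x hx
    rw [ENNReal.ofReal_rpow_of_nonneg (by positivity) zero_le_two, rpow_two, inv_pow,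
      sq_sqrt hx.le]
  have holder := ENNReal.lintegral_mul_le_Lp_mul_Lq μ Real.HolderConjugate.two_two
    (f := f) (g := g) (by fun_prop) (by fun_prop)
  rw [lintegral_congr_ae hfg, lintegral_congr_ae hf2, lintegral_congr_ae hg2] at holder
  calc _ ≤ _ := pow_le_pow_left₀ zero_le holder 2
    _ = _ := by
      rw [mul_pow, ← ENNReal.rpow_natCast, ← ENNReal.rpow_natCast, ← ENNReal.rpow_mul,
        ← ENNReal.rpow_mul]
      norm_num

theorem lintegral_Ioo_inv_mul_rpow_le_of_antitoneOn {a : ℝ → ℝ} {θ γ x : ℝ} (hx : 0 < x)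
    (hγθ : γ + θ < 1)
    (ha_pos : ∀ t ∈ Ioc 0 x, 0 < a t) (hmono : AntitoneOn (fun t => a t / t ^ θ) (Ioc 0 x)) :
    ∫⁻ t in Ioo 0 x, ENNReal.ofReal (a t * t ^ γ)⁻¹ ≤
      ENNReal.ofReal (x ^ (1 - γ) / ((1 - γ - θ) * a x)) := by
  have hxI : x ∈ Ioc 0 x := ⟨hx, le_rfl⟩
  have hax := ha_pos x hxI
  calc ∫⁻ t in Ioo 0 x, ENNReal.ofReal (a t * t ^ γ)⁻¹
      ≤ ∫⁻ t in Ioo 0 x, ENNReal.ofReal (x ^ θ / a x) * ENNReal.ofReal (t ^ (-γ - θ)) := by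
        refine setLIntegral_mono' measurableSet_Ioo fun t ht => ?_
        have htI : t ∈ Ioc 0 x := Ioo_subset_Ioc_self ht
        have hat := ha_pos t htI
        have hratio : a x / x ^ θ ≤ a t / t ^ θ := hmono htI hxI ht.2.le
        rw [← ENNReal.ofReal_mul (by positivity)]
        gcongr
        calc (a t * t ^ γ)⁻¹ = t ^ θ / a t * t ^ (-γ - θ) := by
              have := rpow_pos_of_pos ht.1 θ
              rw [sub_eq_add_neg, rpow_add ht.1, rpow_neg ht.1.le, rpow_neg ht.1.le]
              field_simp
          _ ≤ x ^ θ / a x * t ^ (-γ - θ) := by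
              refine mul_le_mul_of_nonneg_right ?_ (rpow_nonneg ht.1.le _)
              rw [div_le_div_iff₀ hat hax]
              rw [div_le_div_iff₀ (rpow_pos_of_pos hx θ) (rpow_pos_of_pos ht.1 θ)] at hratio
              linarith
    _ = ENNReal.ofReal (x ^ θ / a x) * ENNReal.ofReal (x ^ (1 - γ - θ) / (1 - γ - θ)) := by
        rw [lintegral_const_mul' _ _ ENNReal.ofReal_ne_top, lintegral_Ioo_rpow (by linarith) hx.le]
        ring_nf
    _ = ENNReal.ofReal (x ^ (1 - γ) / ((1 - γ - θ) * a x)) := by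
        rw [← ENNReal.ofReal_mul (by positivity)]
        congr 1
        have hsplit : x ^ (1 - γ) = x ^ θ * x ^ (1 - γ - θ) := by rw [← rpow_add hx]; ring_nf
        rw [hsplit]
        field_simp

theorem lintegral_mul_setLIntegral_Iio_comm {α : Type*} [LinearOrder α] [TopologicalSpace α]
    [OrderClosedTopology α] [SecondCountableTopology α] [MeasurableSpace α]
    [OpensMeasurableSpace α] {μ : Measure α} [SFinite μ] {f g : α → ℝ≥0∞}
    (hf : AEMeasurable f μ) (hg : AEMeasurable g μ) :
    ∫⁻ x, f x * ∫⁻ t in Iio x, g t ∂μ ∂μ = ∫⁻ t, g t * ∫⁻ x in Ioi t, f x ∂μ ∂μ := by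
  have hF : AEMeasurable (Function.uncurry fun x t =>
      {p : α × α | p.2 < p.1}.indicator (fun p => f p.1 * g p.2) (x, t)) (μ.prod μ) :=
    (hf.comp_fst.mul hg.comp_snd).indicator (measurableSet_lt measurable_snd measurable_fst)
  calc ∫⁻ x, f x * ∫⁻ t in Iio x, g t ∂μ ∂μ
      = ∫⁻ x, ∫⁻ t, {p : α × α | p.2 < p.1}.indicator (fun p => f p.1 * g p.2) (x, t) ∂μ ∂μ := by
        congr with x
        rw [← lintegral_const_mul'' _ (hg.mono_measure Measure.restrict_le_self),
          ← lintegral_indicator measurableSet_Iio]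
        rfl
    _ = ∫⁻ t, ∫⁻ x, {p : α × α | p.2 < p.1}.indicator (fun p => f p.1 * g p.2) (x, t) ∂μ ∂μ :=
        lintegral_lintegral_swap hF
    _ = ∫⁻ t, g t * ∫⁻ x in Ioi t, f x ∂μ ∂μ := by
        congr with t
        rw [mul_comm, ← lintegral_mul_const'' _ (hf.mono_measure Measure.restrict_le_self),
          ← lintegral_indicator measurableSet_Ioi]
        rfl

theorem lintegral_Ioo_rpow_mul_lintegral_le {γ b : ℝ} (hγ : 0 < γ) {g : ℝ → ℝ≥0∞}
    (hg : AEMeasurable g (volume.restrict (Ioo 0 b))) :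
    ∫⁻ x in Ioo 0 b, ENNReal.ofReal (x ^ (-1 - γ)) * ∫⁻ t in Ioo 0 x, g t ≤
      ENNReal.ofReal γ⁻¹ * ∫⁻ t in Ioo 0 b, ENNReal.ofReal (t ^ (-γ)) * g t := by
  have swap := lintegral_mul_setLIntegral_Iio_comm (by fun_prop) hg
    (f := fun x => ENNReal.ofReal (x ^ (-1 - γ)))
  simp only [Measure.restrict_restrict measurableSet_Iio,
    Measure.restrict_restrict measurableSet_Ioi] at swap
  calc ∫⁻ x in Ioo 0 b, ENNReal.ofReal (x ^ (-1 - γ)) * ∫⁻ t in Ioo 0 x, g t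
      = ∫⁻ t in Ioo 0 b, g t * ∫⁻ x in Ioi t ∩ Ioo 0 b, ENNReal.ofReal (x ^ (-1 - γ)) := by
        rw [← swap]
        refine setLIntegral_congr_fun measurableSet_Ioo fun x hx => ?_
        rw [Iio_inter_Ioo, min_eq_left hx.2.le]
    _ ≤ ∫⁻ t in Ioo 0 b, g t * ENNReal.ofReal (t ^ (-γ) / γ) := by
        refine setLIntegral_mono' measurableSet_Ioo fun t ht => ?_
        gcongr
        calc _ ≤ ∫⁻ x in Ioi t, ENNReal.ofReal (x ^ (-1 - γ)) :=
              lintegral_mono_set inter_subset_left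
          _ = _ := by
            rw [lintegral_Ioi_rpow (by linarith) ht.1]
            ring_nf
    _ = ENNReal.ofReal γ⁻¹ * ∫⁻ t in Ioo 0 b, ENNReal.ofReal (t ^ (-γ)) * g t := by
        rw [← lintegral_const_mul' _ _ ENNReal.ofReal_ne_top]
        refine lintegral_congr fun t => ?_
        rw [div_eq_inv_mul, ENNReal.ofReal_mul (inv_nonneg.2 hγ.le)]
        ring

theorem ofReal_div_sq_mul_sq_le_lintegral {a w w' : ℝ → ℝ} {θ γ x : ℝ} (hx : 0 < x)
    (hγθ : γ + θ < 1)
    (ha : AEMeasurable a (volume.restrict (Ioo 0 x))) (ha_pos : ∀ t ∈ Ioc 0 x, 0 < a t)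
    (hmono : AntitoneOn (fun t => a t / t ^ θ) (Ioc 0 x))
    (hw : ∀ t ∈ Ioc 0 x, HasDerivAt w (w' t) t) (hw0 : ContinuousWithinAt w (Icc 0 x) 0)
    (hw00 : w 0 = 0) :
    ENNReal.ofReal (a x / x ^ 2 * w x ^ 2) ≤ ENNReal.ofReal (1 - γ - θ)⁻¹ *
      (ENNReal.ofReal (x ^ (-1 - γ)) *
        ∫⁻ t in Ioo 0 x, ENNReal.ofReal (a t * t ^ γ * w' t ^ 2)) := by
  have hρ_pos : ∀ᵐ t ∂volume.restrict (Ioo 0 x), 0 < a t * t ^ γ :=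
    (ae_restrict_iff' measurableSet_Ioo).2 (ae_of_all _ fun t ht =>
      mul_pos (ha_pos t (Ioo_subset_Ioc_self ht)) (rpow_pos_of_pos ht.1 γ))
  have hcs := sq_lintegral_enorm_le_weighted
    (aemeasurable_of_hasDerivAt measurableSet_Ioo fun t ht => hw t (Ioo_subset_Ioc_self ht))
    (ha.mul (by fun_prop)) hρ_pos
  have hftc := enorm_sub_le_lintegral_enorm_of_hasDerivAt hx.le hw0 hw
  rw [hw00, sub_zero] at hftc
  have hax := ha_pos x ⟨hx, le_rfl⟩
  calc ENNReal.ofReal (a x / x ^ 2 * w x ^ 2)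
      = ENNReal.ofReal (a x / x ^ 2) * ‖w x‖ₑ ^ 2 := by
        rw [ENNReal.ofReal_mul (by positivity), enorm_eq_ofReal_abs, ← ENNReal.ofReal_pow
          (abs_nonneg _), sq_abs]
    _ ≤ ENNReal.ofReal (a x / x ^ 2) *
          ((∫⁻ t in Ioo 0 x, ENNReal.ofReal (a t * t ^ γ * w' t ^ 2)) *
            ENNReal.ofReal (x ^ (1 - γ) / ((1 - γ - θ) * a x))) := by
        gcongr
        exact (pow_le_pow_left₀ zero_le hftc 2).trans (hcs.trans (mul_le_mul_right
          (lintegral_Ioo_inv_mul_rpow_le_of_antitoneOn hx hγθ ha_pos hmono) _))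
    _ = ENNReal.ofReal (a x / x ^ 2 * (x ^ (1 - γ) / ((1 - γ - θ) * a x))) *
          ∫⁻ t in Ioo 0 x, ENNReal.ofReal (a t * t ^ γ * w' t ^ 2) := by
        rw [ENNReal.ofReal_mul (by positivity)]
        ring
    _ = ENNReal.ofReal ((1 - γ - θ)⁻¹ * x ^ (-1 - γ)) *
          ∫⁻ t in Ioo 0 x, ENNReal.ofReal (a t * t ^ γ * w' t ^ 2) := by
        have hsplit : x ^ (1 - γ) = x ^ (-1 - γ) * x ^ 2 := by
          rw [← rpow_natCast, ← rpow_add hx]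
          congr 1
          ring
        rw [hsplit]
        field_simp
    _ = _ := by
        rw [ENNReal.ofReal_mul (inv_nonneg.2 (by linarith)), mul_assoc]

theorem hardy_poincare_case_a_general (a : ℝ → ℝ)
    (ha_cont : ContinuousOn a (Icc 0 1))
    (ha_pos : ∀ x ∈ Ioc (0:ℝ) 1, 0 < a x)
    (θ : ℝ) (hθ : θ ∈ Ioo (0:ℝ) 1)
    (hmono : AntitoneOn (fun x => a x / x ^ θ) (Ioc 0 1)) :
    ∃ C_H > (0:ℝ), ∀ w w' : ℝ → ℝ,
      (∀ x ∈ Ioc (0:ℝ) 1, HasDerivAt w (w' x) x) →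
      ContinuousWithinAt w (Icc 0 1) 0 →
      w 0 = 0 →
      (∫⁻ x in Ioo (0:ℝ) 1, ENNReal.ofReal (a x * w' x ^ 2)) < ⊤ →
      (∫⁻ x in Ioo (0:ℝ) 1, ENNReal.ofReal (a x / x ^ 2 * w x ^ 2)) ≤
        ENNReal.ofReal C_H * ∫⁻ x in Ioo (0:ℝ) 1, ENNReal.ofReal (a x * w' x ^ 2) := by
  set γ := (1 - θ) / 2 with hγ_def
  have hγ : 0 < γ := by linarith [hθ.2]
  have hγθ : 1 - γ - θ = γ := by linarith
  refine ⟨(γ * γ)⁻¹, by positivity, fun w w' hw hw0 hw00 _ => ?_⟩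
  have ha : AEMeasurable a (volume.restrict (Ioo 0 1)) :=
    (ha_cont.aemeasurable measurableSet_Icc).mono_set Ioo_subset_Icc_self
  have hw' : AEMeasurable w' (volume.restrict (Ioo 0 1)) :=
    aemeasurable_of_hasDerivAt measurableSet_Ioo fun t ht => hw t (Ioo_subset_Ioc_self ht)
  calc ∫⁻ x in Ioo 0 1, ENNReal.ofReal (a x / x ^ 2 * w x ^ 2)
      ≤ ∫⁻ x in Ioo 0 1, ENNReal.ofReal γ⁻¹ * (ENNReal.ofReal (x ^ (-1 - γ)) *
          ∫⁻ t in Ioo 0 x, ENNReal.ofReal (a t * t ^ γ * w' t ^ 2)) := by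
        refine setLIntegral_mono' measurableSet_Ioo fun x hx => ?_
        have hsub : Ioc 0 x ⊆ Ioc 0 1 := Ioc_subset_Ioc_right hx.2.le
        have hx_bound := ofReal_div_sq_mul_sq_le_lintegral (γ := γ) hx.1 (by linarith [hθ.2])
          (ha.mono_set (Ioo_subset_Ioo_right hx.2.le)) (fun t ht => ha_pos t (hsub ht))
          (hmono.mono hsub) (fun t ht => hw t (hsub ht))
          (hw0.mono (Icc_subset_Icc_right hx.2.le)) hw00
        rwa [hγθ] at hx_bound
    _ ≤ ENNReal.ofReal γ⁻¹ * (ENNReal.ofReal γ⁻¹ * ∫⁻ t in Ioo 0 1,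
          ENNReal.ofReal (t ^ (-γ)) * ENNReal.ofReal (a t * t ^ γ * w' t ^ 2)) := by
        rw [lintegral_const_mul' _ _ ENNReal.ofReal_ne_top]
        gcongr
        exact lintegral_Ioo_rpow_mul_lintegral_le hγ (by fun_prop)
    _ = ENNReal.ofReal (γ * γ)⁻¹ * ∫⁻ x in Ioo 0 1, ENNReal.ofReal (a x * w' x ^ 2) := by
        rw [← mul_assoc, ← ENNReal.ofReal_mul (by positivity), mul_inv]
        congr 1
        refine setLIntegral_congr_fun measurableSet_Ioo fun t ht => ?_
        rw [← ENNReal.ofReal_mul (rpow_nonneg ht.1.le _), rpow_neg ht.1.le]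
        have := rpow_pos_of_pos ht.1 γ
        field_simp

/-- Hardy–Poincaré inequality, case (a): if `x ↦ a(x)/x^θ` is nonincreasing on `(0,1]`
for some `θ ∈ (0,1)`, then `∫₀¹ (a/x²) w² ≤ C_H ∫₀¹ a |w'|²` for every `w` that is
differentiable on `(0,1]`, continuous at `0`, vanishes at `0`, and has
`∫₀¹ a |w'|² < ∞`. -/
theorem hardy_poincare_case_a (a : ℝ → ℝ)
    (ha_cont : ContinuousOn a (Icc 0 1))
    (ha0 : a 0 = 0)
    (ha_pos : ∀ x ∈ Ioc (0:ℝ) 1, 0 < a x)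
    (θ : ℝ) (hθ : θ ∈ Ioo (0:ℝ) 1)
    (hmono : AntitoneOn (fun x => a x / x ^ θ) (Ioc 0 1)) :
    ∃ C_H > (0:ℝ), ∀ w w' : ℝ → ℝ,
      (∀ x ∈ Ioc (0:ℝ) 1, HasDerivAt w (w' x) x) →
      ContinuousWithinAt w (Icc 0 1) 0 →
      w 0 = 0 →
      (∫⁻ x in Ioo (0:ℝ) 1, ENNReal.ofReal (a x * w' x ^ 2)) < ⊤ →
      (∫⁻ x in Ioo (0:ℝ) 1, ENNReal.ofReal (a x / x ^ 2 * w x ^ 2)) ≤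
        ENNReal.ofReal C_H * ∫⁻ x in Ioo (0:ℝ) 1, ENNReal.ofReal (a x * w' x ^ 2) :=
  hardy_poincare_case_a_general a ha_cont ha_pos θ hθ hmono
end

section
/- (Sign of the boundary term.) For every s>0, λ>0 and every regular solution v of the auxiliary degenerate problem with right-hand side h ∈ L²(Q), setting w = e^{sφ} v, one has −s ∫₀ᵀ [ a² φ_x w_x² ]_{x=0}^{x=1} dt = −sλ ∫₀ᵀ [ a² ψ' σ w_x² ]_{x=0}^{x=1} dt ≥ 0. -/
open MeasureTheory Set Real Filter

noncomputable section

/-- The sup norm of `ψ` on `[0,1]`. -/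
def psiSup (ψ : ℝ → ℝ) : ℝ := ⨆ x : Icc (0:ℝ) 1, |ψ x.1|

/-- `Θ(t) = 1/(t(T-t))⁴`. -/
def thetaFun (T t : ℝ) : ℝ := 1 / (t * (T - t)) ^ 4

/-- `η(x) = exp (λ(‖ψ‖_∞ + ψ x))`. -/
def etaFun (ψ : ℝ → ℝ) (lam x : ℝ) : ℝ := exp (lam * (psiSup ψ + ψ x))

/-- `σ(t,x) = Θ(t) η(x)`. -/
def sigmaFun (T : ℝ) (ψ : ℝ → ℝ) (lam t x : ℝ) : ℝ := thetaFun T t * etaFun ψ lam x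

/-- `φ(t,x) = Θ(t) (exp (λ(‖ψ‖_∞ + ψ x)) - exp (3λ‖ψ‖_∞))`. -/
def phiFun (T : ℝ) (ψ : ℝ → ℝ) (lam t x : ℝ) : ℝ :=
  thetaFun T t * (etaFun ψ lam x - exp (3 * (lam * psiSup ψ)))

/-- Partial derivative in the space variable. -/
def pderivX (f : ℝ → ℝ → ℝ) (t x : ℝ) : ℝ := deriv (fun y => f t y) x

/-- Partial derivative in the time variable. -/
def pderivT (f : ℝ → ℝ → ℝ) (t x : ℝ) : ℝ := deriv (fun τ => f τ x) t

/-- `w = e^{sφ} v`. -/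
def wFun (T : ℝ) (ψ : ℝ → ℝ) (lam s : ℝ) (v : ℝ → ℝ → ℝ) (t x : ℝ) : ℝ :=
  exp (s * phiFun T ψ lam t x) * v t x

/-- The cylinder `(0,T) × (l,r)`. -/
def QSub (T l r : ℝ) : Set (ℝ × ℝ) := Ioo 0 T ×ˢ Ioo l r

/-- Structural hypotheses on the degenerate coefficient `a` (whose derivative on `(0,1]`
is the given function `a'`): `a ∈ C([0,1]) ∩ C¹((0,1])` is nondecreasing, `a(0) = 0` and
`a > 0` on `(0,1]`. -/
structure DegenCoeff (a a' : ℝ → ℝ) : Prop where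
  cont : ContinuousOn a (Icc 0 1)
  hasDeriv : ∀ x ∈ Ioc (0:ℝ) 1, HasDerivAt a (a' x) x
  contDeriv : ContinuousOn a' (Ioc 0 1)
  mono : MonotoneOn a (Icc 0 1)
  zero : a 0 = 0
  pos : ∀ x ∈ Ioc (0:ℝ) 1, 0 < a x

/-- Weak degeneracy: `x a'(x) ≤ K a(x)` on `(0,1]` with `K ∈ [0,1)`. -/
def DegenWeak (a a' : ℝ → ℝ) (K : ℝ) : Prop :=
  0 ≤ K ∧ K < 1 ∧ ∀ x ∈ Ioc (0:ℝ) 1, x * a' x ≤ K * a x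

/-- Strong degeneracy: `x a'(x) ≤ K a(x)` on `(0,1]` with `K ∈ [1,2)`, together with the
additional condition `θ a ≤ x a'` near zero, with `θ ∈ (1,K]` if `K > 1` and `θ ∈ (0,1)`
if `K = 1`. -/
def DegenStrong (a a' : ℝ → ℝ) (K : ℝ) : Prop :=
  1 ≤ K ∧ K < 2 ∧ (∀ x ∈ Ioc (0:ℝ) 1, x * a' x ≤ K * a x) ∧
    ∃ θ δ : ℝ, 0 < δ ∧ δ ≤ 1 ∧ (∀ x ∈ Ioc (0:ℝ) δ, θ * a x ≤ x * a' x) ∧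
      (1 < K → 1 < θ ∧ θ ≤ K) ∧ (K = 1 → 0 < θ ∧ θ < 1)

/-- The weight function `ψ ∈ C²([0,1])`, equal to `∫₀ˣ y/a(y) dy` on `[0, l)` and to
`-∫_r^x y/a(y) dy` on `[r, 1]`. -/
structure WeightPsi (a : ℝ → ℝ) (l r : ℝ) (ψ : ℝ → ℝ) : Prop where
  smooth : ContDiffOn ℝ 2 ψ (Icc 0 1)
  left : ∀ x ∈ Ico (0:ℝ) l, ψ x = ∫ y in (0:ℝ)..x, y / a y
  right : ∀ x ∈ Icc r 1, ψ x = -∫ y in r..x, y / a y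

/-- A regular solution of `v_t + (a v_x)_x = rhs` in `Q = (0,T)×(0,1)` with `v(t,1) = 0`:
`v, v_x` are continuous on `[0,T]×(0,1]`, `v_t, (a v_x)_x` are continuous on `(0,T)×(0,1]`. -/
structure RegSol (T : ℝ) (a : ℝ → ℝ) (rhs : ℝ → ℝ → ℝ) (v : ℝ → ℝ → ℝ) : Prop where
  contV : ContinuousOn (fun p : ℝ × ℝ => v p.1 p.2) (Icc 0 T ×ˢ Ioc 0 1)
  contVx : ContinuousOn (fun p : ℝ × ℝ => pderivX v p.1 p.2) (Icc 0 T ×ˢ Ioc 0 1)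
  contVt : ContinuousOn (fun p : ℝ × ℝ => pderivT v p.1 p.2) (Ioo 0 T ×ˢ Ioc 0 1)
  contAVxx : ContinuousOn
      (fun p : ℝ × ℝ => pderivX (fun t x => a x * pderivX v t x) p.1 p.2)
      (Ioo 0 T ×ˢ Ioc 0 1)
  eq : ∀ t ∈ Ioo 0 T, ∀ x ∈ Ioo (0:ℝ) 1,
      pderivT v t x + pderivX (fun t x => a x * pderivX v t x) t x = rhs t x
  bdryOne : ∀ t ∈ Ioo 0 T, v t 1 = 0

/-- Dirichlet boundary condition at `x = 0` (weak degeneracy case). -/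
def BdryWeak (T : ℝ) (v : ℝ → ℝ → ℝ) : Prop := ∀ t ∈ Ioo 0 T, v t 0 = 0

/-- Boundary condition `(a v_x)(t,0) = 0` at `x = 0` (strong degeneracy case),
understood as a one-sided limit. -/
def BdryStrong (T : ℝ) (a : ℝ → ℝ) (v : ℝ → ℝ → ℝ) : Prop :=
  ∀ t ∈ Ioo 0 T, Tendsto (fun x => a x * pderivX v t x)
    (nhdsWithin 0 (Ioi 0)) (nhds 0)

end

/-! Since `φ_x = λ ψ' σ`, the two boundary terms agree up to the factor `λ`, and so do their
limits at `x = 0`. The sign then comes from `ψ` alone: on `[β', 1]` it is minus a primitive of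
the nonnegative `x / a x`, so `ψ'(1) ≤ 0` and the term at `x = 1` is `≤ 0`; on `(0, α')` it is a
primitive of the same function, so `ψ' ≥ 0` there and the limit at `x = 0` is `≥ 0`. -/

-- Also where `g` is not differentiable: then neither is `exp ∘ g`, and both sides are `0`.
lemma deriv_exp_comp (g : ℝ → ℝ) (x : ℝ) :
    deriv (fun y => exp (g y)) x = exp (g x) * deriv g x := by
  by_cases hg : DifferentiableAt ℝ g x
  · exact deriv_exp hg
  · have hexp : ¬ DifferentiableAt ℝ (fun y => exp (g y)) x := fun h =>
      hg (by simpa using h.log (exp_pos (g x)).ne')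
    rw [deriv_zero_of_not_differentiableAt hexp, deriv_zero_of_not_differentiableAt hg, mul_zero]

lemma pderivX_phiFun (T : ℝ) (ψ : ℝ → ℝ) (lam t x : ℝ) :
    pderivX (phiFun T ψ lam) t x = lam * deriv ψ x * sigmaFun T ψ lam t x := by
  simp only [pderivX, phiFun, etaFun, sigmaFun, deriv_const_mul_field, deriv_sub_const,
    deriv_exp_comp, deriv_const_add]
  ring

lemma sigmaFun_nonneg (T : ℝ) (ψ : ℝ → ℝ) (lam t x : ℝ) : 0 ≤ sigmaFun T ψ lam t x := by
  unfold sigmaFun thetaFun etaFun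
  positivity

lemma monotoneOn_intervalIntegral_of_nonneg {f : ℝ → ℝ} {c r : ℝ}
    (hf : ContinuousOn f (Ioc c r)) (hf0 : ∀ x ∈ Ioc c r, 0 ≤ f x) :
    MonotoneOn (fun x => ∫ y in c..x, f y) (Ioc c r) := by
  intro u hu v hv huv
  have hsub : Icc u v ⊆ Ioc c r := Icc_subset_Ioc hu.1 hv.2
  by_cases hcu : IntervalIntegrable f volume c u
  · have huv_int : IntervalIntegrable f volume u v :=
      (hf.mono hsub).intervalIntegrable_of_Icc huv
    have hnonneg : 0 ≤ ∫ y in u..v, f y :=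
      intervalIntegral.integral_nonneg huv fun y hy => hf0 y (hsub hy)
    simp only
    rw [← intervalIntegral.integral_add_adjacent_intervals hcu huv_int]
    linarith
  · -- `f` may fail to be integrable at the endpoint `c`; then both integrals are the junk value `0`.
    have hcv : ¬ IntervalIntegrable f volume c v := fun h =>
      hcu (h.mono_set (uIcc_subset_uIcc_left (mem_uIcc_of_le hu.1.le huv)))
    simp only [intervalIntegral.integral_undef hcu, intervalIntegral.integral_undef hcv, le_refl]

section WeightPsi

variable {a a' ψ : ℝ → ℝ} {l r : ℝ}

lemma DegenCoeff.continuousOn_id_div (ha : DegenCoeff a a') :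
    ContinuousOn (fun y => y / a y) (Ioc 0 1) :=
  continuousOn_id.div (ha.cont.mono Ioc_subset_Icc_self) fun y hy => (ha.pos y hy).ne'

lemma DegenCoeff.id_div_nonneg (ha : DegenCoeff a a') {y : ℝ} (hy : y ∈ Ioc 0 1) :
    0 ≤ y / a y :=
  div_nonneg hy.1.le (ha.pos y hy).le

lemma WeightPsi.deriv_nonneg_of_mem_Ioo (ha : DegenCoeff a a') (hψ : WeightPsi a l r ψ)
    (hl : l ≤ 1) {x : ℝ} (hx : x ∈ Ioo 0 l) : 0 ≤ deriv ψ x := by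
  have hsub : Ioc 0 l ⊆ Ioc 0 1 := Ioc_subset_Ioc_right hl
  have hmono : MonotoneOn ψ (Ioo 0 l) := by
    intro u hu v hv huv
    rw [hψ.left u ⟨hu.1.le, hu.2⟩, hψ.left v ⟨hv.1.le, hv.2⟩]
    exact monotoneOn_intervalIntegral_of_nonneg (ha.continuousOn_id_div.mono hsub)
      (fun y hy => ha.id_div_nonneg (hsub hy)) (Ioo_subset_Ioc_self hu) (Ioo_subset_Ioc_self hv) huv
  rw [← derivWithin_of_isOpen isOpen_Ioo hx]
  exact hmono.derivWithin_nonneg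

lemma WeightPsi.deriv_one_nonpos (ha : DegenCoeff a a') (hψ : WeightPsi a l r ψ)
    (hr0 : 0 < r) (hr1 : r < 1) : deriv ψ 1 ≤ 0 := by
  have hsub : Ioc r 1 ⊆ Ioc 0 1 := Ioc_subset_Ioc_left hr0.le
  have hanti : AntitoneOn ψ (Ioc r 1) := by
    intro u hu v hv huv
    rw [hψ.right u (Ioc_subset_Icc_self hu), hψ.right v (Ioc_subset_Icc_self hv), neg_le_neg_iff]
    exact monotoneOn_intervalIntegral_of_nonneg (ha.continuousOn_id_div.mono hsub)
      (fun y hy => ha.id_div_nonneg (hsub hy)) hu hv huv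
  by_cases hd : DifferentiableAt ℝ ψ 1
  · rw [← hd.derivWithin (uniqueDiffOn_Ioc r 1 1 ⟨hr1, le_rfl⟩)]
    exact hanti.derivWithin_nonpos
  · rw [deriv_zero_of_not_differentiableAt hd]

end WeightPsi

theorem boundary_term_sign_general
    (T αw βw α' β' : ℝ)
    (hαw : 0 < αw) (hαα' : αw < α') (hα'β' : α' < β')
    (hβ'β : β' < βw) (hβw : βw < 1)
    (a a' ψ : ℝ → ℝ)
    (ha : DegenCoeff a a')
    (hψ : WeightPsi a α' β' ψ) :
    ∀ s > (0:ℝ), ∀ lam > (0:ℝ), ∀ h v : ℝ → ℝ → ℝ, ∀ B B2 : ℝ → ℝ,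
        IntegrableOn (fun p : ℝ × ℝ => h p.1 p.2 ^ 2) (QSub T 0 1) →
        RegSol T a h v →
        (BdryWeak T v ∨ BdryStrong T a v) →
        (∀ t ∈ Ioo 0 T, Tendsto (fun x => (a x) ^ 2 * pderivX (phiFun T ψ lam) t x * (pderivX (wFun T ψ lam s v) t x) ^ 2)
          (nhdsWithin 0 (Ioi 0)) (nhds (B t))) →
        (∀ t ∈ Ioo 0 T, Tendsto (fun x => (a x) ^ 2 * deriv ψ x * sigmaFun T ψ lam t x * (pderivX (wFun T ψ lam s v) t x) ^ 2)
          (nhdsWithin 0 (Ioi 0)) (nhds (B2 t))) →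
        IntegrableOn (fun t : ℝ => ((a 1) ^ 2 * pderivX (phiFun T ψ lam) t 1 * (pderivX (wFun T ψ lam s v) t 1) ^ 2 - B t)) (Ioo 0 T) →
        IntegrableOn (fun t : ℝ => ((a 1) ^ 2 * deriv ψ 1 * sigmaFun T ψ lam t 1 * (pderivX (wFun T ψ lam s v) t 1) ^ 2 - B2 t)) (Ioo 0 T) →
        (-(s) * (∫ t in Ioo (0:ℝ) T, ((a 1) ^ 2 * pderivX (phiFun T ψ lam) t 1 * (pderivX (wFun T ψ lam s v) t 1) ^ 2 - B t)) =
            -(s * lam) * (∫ t in Ioo (0:ℝ) T, ((a 1) ^ 2 * deriv ψ 1 * sigmaFun T ψ lam t 1 * (pderivX (wFun T ψ lam s v) t 1) ^ 2 - B2 t)) ∧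
          0 ≤ -(s * lam) * (∫ t in Ioo (0:ℝ) T, ((a 1) ^ 2 * deriv ψ 1 * sigmaFun T ψ lam t 1 * (pderivX (wFun T ψ lam s v) t 1) ^ 2 - B2 t))) := by
  intro s hs lam hlam h v B B2 _ _ _ hB hB2 _ _
  set W := pderivX (wFun T ψ lam s v)
  have hB_eq : ∀ t ∈ Ioo 0 T, B t = lam * B2 t := fun t ht =>
    tendsto_nhds_unique (hB t ht) (by
      simpa only [pderivX_phiFun, mul_assoc, mul_left_comm lam] using (hB2 t ht).const_mul lam)
  have hB2_nonneg : ∀ t ∈ Ioo 0 T, 0 ≤ B2 t := fun t ht => by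
    refine ge_of_tendsto (hB2 t ht) ?_
    filter_upwards [Ioo_mem_nhdsGT (hαw.trans hαα')] with x hx
    have := hψ.deriv_nonneg_of_mem_Ioo ha (by linarith) hx
    have := sigmaFun_nonneg T ψ lam t x
    positivity
  have hψ_one : deriv ψ 1 ≤ 0 := hψ.deriv_one_nonpos ha (by linarith) (by linarith)
  have hI_nonpos : ∫ t in Ioo (0:ℝ) T, ((a 1) ^ 2 * deriv ψ 1 * sigmaFun T ψ lam t 1 * W t 1 ^ 2
      - B2 t) ≤ 0 := by
    refine setIntegral_nonpos measurableSet_Ioo fun t ht => ?_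
    have := mul_nonneg (mul_nonneg (sq_nonneg (a 1)) (sigmaFun_nonneg T ψ lam t 1)) (sq_nonneg (W t 1))
    nlinarith [hB2_nonneg t ht]
  have hI_eq : ∫ t in Ioo (0:ℝ) T, (a 1 ^ 2 * pderivX (phiFun T ψ lam) t 1 * W t 1 ^ 2 - B t)
      = lam * ∫ t in Ioo (0:ℝ) T, (a 1 ^ 2 * deriv ψ 1 * sigmaFun T ψ lam t 1 * W t 1 ^ 2
        - B2 t) := by
    rw [← integral_const_mul]
    refine setIntegral_congr_fun measurableSet_Ioo fun t ht => ?_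
    simp only [pderivX_phiFun, hB_eq t ht]
    ring
  exact ⟨by rw [hI_eq]; ring, mul_nonneg_of_nonpos_of_nonpos (neg_nonpos.mpr (mul_pos hs hlam).le) hI_nonpos⟩

theorem boundary_term_sign
    (T αw βw α' β' K : ℝ)
    (hT : 0 < T) (hαw : 0 < αw) (hαα' : αw < α') (hα'β' : α' < β')
    (hβ'β : β' < βw) (hβw : βw < 1)
    (a a' ψ : ℝ → ℝ)
    (ha : DegenCoeff a a')
    (hK : DegenWeak a a' K ∨ DegenStrong a a' K)
    (hψ : WeightPsi a α' β' ψ) :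
    ∀ s > (0:ℝ), ∀ lam > (0:ℝ), ∀ h v : ℝ → ℝ → ℝ, ∀ B B2 : ℝ → ℝ,
        IntegrableOn (fun p : ℝ × ℝ => h p.1 p.2 ^ 2) (QSub T 0 1) →
        RegSol T a h v →
        (BdryWeak T v ∨ BdryStrong T a v) →
        (∀ t ∈ Ioo 0 T, Tendsto (fun x => (a x) ^ 2 * pderivX (phiFun T ψ lam) t x * (pderivX (wFun T ψ lam s v) t x) ^ 2)
          (nhdsWithin 0 (Ioi 0)) (nhds (B t))) →
        (∀ t ∈ Ioo 0 T, Tendsto (fun x => (a x) ^ 2 * deriv ψ x * sigmaFun T ψ lam t x * (pderivX (wFun T ψ lam s v) t x) ^ 2)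
          (nhdsWithin 0 (Ioi 0)) (nhds (B2 t))) →
        IntegrableOn (fun t : ℝ => ((a 1) ^ 2 * pderivX (phiFun T ψ lam) t 1 * (pderivX (wFun T ψ lam s v) t 1) ^ 2 - B t)) (Ioo 0 T) →
        IntegrableOn (fun t : ℝ => ((a 1) ^ 2 * deriv ψ 1 * sigmaFun T ψ lam t 1 * (pderivX (wFun T ψ lam s v) t 1) ^ 2 - B2 t)) (Ioo 0 T) →
        (-(s) * (∫ t in Ioo (0:ℝ) T, ((a 1) ^ 2 * pderivX (phiFun T ψ lam) t 1 * (pderivX (wFun T ψ lam s v) t 1) ^ 2 - B t)) =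
            -(s * lam) * (∫ t in Ioo (0:ℝ) T, ((a 1) ^ 2 * deriv ψ 1 * sigmaFun T ψ lam t 1 * (pderivX (wFun T ψ lam s v) t 1) ^ 2 - B2 t)) ∧
          0 ≤ -(s * lam) * (∫ t in Ioo (0:ℝ) T, ((a 1) ^ 2 * deriv ψ 1 * sigmaFun T ψ lam t 1 * (pderivX (wFun T ψ lam s v) t 1) ^ 2 - B2 t))) :=
  boundary_term_sign_general T αw βw α' β' hαw hαα' hα'β' hβ'β hβw a a' ψ ha hψ
end
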